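/- Let C₁ > 0, Δh > 0, and suppose ε ∈ (0, 1/(1 + C₁)). Then the throughput λ ↦ λ(1/(1+C₁))e^{−πλC₁Δh²}, restricted to the feasible set {λ > 0 : (1/(1+C₁))e^{−πλC₁Δh²} > ε}, has supremum attained at min(λ*, λ†), where λ* = ln(ε^{−1}(1+C₁)^{−1})/(πC₁Δh²) and λ† = 1/(πC₁Δh²). -/
import Mathlib


open MeasureTheory Real Filter

/-- Gaussian hypergeometric function ₂F₁(a,b,c;x) defined by its power series. -/
noncomputable def hyp2F1 (a b c x : ℝ) : ℝ :=
  ∑' n : ℕ, (∏ k ∈ Finset.range n, ((a + k) * (b + k) / ((c + k) * (1 + k)))) * x ^ n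

lemma mono_aux (a : ℝ) (ha : 0 < a) {x y : ℝ} (hx : 0 ≤ x) (hxy : x ≤ y) (hy : y ≤ 1 / a) :
    x * Real.exp (-(a * x)) ≤ y * Real.exp (-(a * y)) := by
  have hy0 : 0 ≤ y := le_trans hx hxy
  have hay : a * y ≤ 1 := by
    rw [le_div_iff₀ ha] at hy; linarith [hy]
  have h1 : x ≤ y * (1 - a * (y - x)) := by nlinarith
  have h2 : 1 - a * (y - x) ≤ Real.exp (-(a * (y - x))) := by
    have := Real.add_one_le_exp (-(a * (y - x))); linarith
  have h3 : x ≤ y * Real.exp (-(a * (y - x))) :=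
    le_trans h1 (mul_le_mul_of_nonneg_left h2 hy0)
  have h4 : x * Real.exp (-(a * x)) ≤ y * Real.exp (-(a * (y - x))) * Real.exp (-(a * x)) :=
    mul_le_mul_of_nonneg_right h3 (Real.exp_pos _).le
  calc x * Real.exp (-(a * x)) ≤ y * Real.exp (-(a * (y - x))) * Real.exp (-(a * x)) := h4
    _ = y * Real.exp (-(a * y)) := by
        rw [mul_assoc, ← Real.exp_add]; ring_nf

lemma max_aux (a : ℝ) (ha : 0 < a) (x : ℝ) :
    x * Real.exp (-(a * x)) ≤ (1 / a) * Real.exp (-(a * (1 / a))) := by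
  have h : a * x ≤ Real.exp (a * x - 1) := by
    have := Real.add_one_le_exp (a * x - 1); linarith
  have h2 : a * x * Real.exp (-(a * x)) ≤ Real.exp (a * x - 1) * Real.exp (-(a * x)) :=
    mul_le_mul_of_nonneg_right h (Real.exp_pos _).le
  have h3 : Real.exp (a * x - 1) * Real.exp (-(a * x)) = Real.exp (-1 : ℝ) := by
    rw [← Real.exp_add]; ring_nf
  have ha1 : a * (1 / a) = 1 := by field_simp
  rw [ha1]
  have : x * Real.exp (-(a * x)) ≤ Real.exp (-1 : ℝ) / a := by
    rw [le_div_iff₀ ha]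
    calc x * Real.exp (-(a * x)) * a = a * x * Real.exp (-(a * x)) := by ring
      _ ≤ Real.exp (-1 : ℝ) := by rw [← h3]; exact h2
  calc x * Real.exp (-(a * x)) ≤ Real.exp (-1 : ℝ) / a := this
    _ = (1 / a) * Real.exp (-1 : ℝ) := by ring

/-- CP-constrained throughput maximization: the supremum of the throughput over the
feasible set is the value at min(λ*, λ†). -/
theorem constrained_throughput_sup (C₁ Δh ε : ℝ) (hC : 0 < C₁) (hh : 0 < Δh)
    (hε0 : 0 < ε) (hε1 : ε < 1 / (1 + C₁)) :
    IsLUB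
      (Set.image (fun l : ℝ => l * (1 / (1 + C₁)) * Real.exp (-π * l * C₁ * Δh ^ 2))
        {l : ℝ | 0 < l ∧ 1 / (1 + C₁) * Real.exp (-π * l * C₁ * Δh ^ 2) > ε})
      ((min (Real.log (ε⁻¹ * (1 + C₁)⁻¹) / (π * C₁ * Δh ^ 2)) (1 / (π * C₁ * Δh ^ 2))) *
        (1 / (1 + C₁)) *
        Real.exp (-π *
          (min (Real.log (ε⁻¹ * (1 + C₁)⁻¹) / (π * C₁ * Δh ^ 2)) (1 / (π * C₁ * Δh ^ 2))) *
          C₁ * Δh ^ 2)) := by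
  set a : ℝ := π * C₁ * Δh ^ 2 with ha_def
  have ha : 0 < a := by positivity
  have hC1 : (0:ℝ) < 1 + C₁ := by linarith
  set c : ℝ := 1 / (1 + C₁) with hc_def
  have hc : 0 < c := by positivity
  set L : ℝ := Real.log (ε⁻¹ * (1 + C₁)⁻¹) with hL_def
  have hLeq : L = -Real.log ε - Real.log (1 + C₁) := by
    rw [hL_def, Real.log_mul (by positivity) (by positivity), Real.log_inv, Real.log_inv]; ring
  have hL : 0 < L := by
    apply Real.log_pos
    rw [← mul_inv]
    exact (one_lt_inv₀ (by positivity)).mpr ((lt_div_iff₀ hC1).mp hε1)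
  have hrw : ∀ l : ℝ, -π * l * C₁ * Δh ^ 2 = -(a * l) := by intro l; rw [ha_def]; ring
  have hfeas : ∀ l : ℝ, (ε < c * Real.exp (-(a * l)) ↔ l < L / a) := by
    intro l
    rw [show c * Real.exp (-(a * l)) = Real.exp (Real.log c + -(a * l)) by
      rw [Real.exp_add, Real.exp_log hc]]
    rw [← Real.log_lt_iff_lt_exp hε0, lt_div_iff₀ ha]
    have hlogc : Real.log c = -Real.log (1 + C₁) := by
      rw [hc_def, one_div, Real.log_inv]
    rw [hlogc, hLeq]
    constructor <;> intro h <;> linarith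
  set m : ℝ := min (L / a) (1 / a) with hm_def
  have hm0 : 0 < m := lt_min (by positivity) (by positivity)
  -- rewrite the goal in terms of a
  simp only [hrw]
  constructor
  · rintro y ⟨l, ⟨hl0, hlf⟩, rfl⟩
    have hl : l < L / a := (hfeas l).mp hlf
    have key : l * Real.exp (-(a * l)) ≤ m * Real.exp (-(a * m)) := by
      by_cases hlm : l ≤ m
      · exact mono_aux a ha hl0.le hlm (min_le_right _ _)
      · push_neg at hlm
        rcases min_cases (L / a) (1 / a) with ⟨h1, h2⟩ | ⟨h1, h2⟩
        · rw [hm_def] at hlm; rw [h1] at hlm; linarith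
        · rw [hm_def, h1]; exact max_aux a ha l
    calc l * c * Real.exp (-(a * l)) = c * (l * Real.exp (-(a * l))) := by ring
      _ ≤ c * (m * Real.exp (-(a * m))) := by
          exact mul_le_mul_of_nonneg_left key hc.le
      _ = m * c * Real.exp (-(a * m)) := by ring
  · intro b hb
    rcases lt_or_ge (1 / a) (L / a) with h | h
    · -- m = 1/a is feasible
      have hmem : (0 : ℝ) < m ∧ ε < c * Real.exp (-(a * m)) := by
        refine ⟨hm0, (hfeas m).mpr ?_⟩
        calc m ≤ 1 / a := min_le_right _ _
          _ < L / a := h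
      exact hb ⟨m, hmem, rfl⟩
    · -- m = L/a; take a limit from the left
      have hmL : m = L / a := min_eq_left h
      have hcont : Tendsto (fun l : ℝ => l * c * Real.exp (-(a * l))) (nhdsWithin (L / a) (Set.Iio (L / a)))
          (nhds ((L / a) * c * Real.exp (-(a * (L / a))))) := by
        apply Tendsto.mono_left _ nhdsWithin_le_nhds
        exact (Continuous.mul (continuous_id.mul continuous_const)
          ((continuous_const.mul continuous_id).neg.rexp)).tendsto _
      rw [hmL]
      apply le_of_tendsto hcont
      have hIoo : Set.Ioo (0 : ℝ) (L / a) ∈ nhdsWithin (L / a) (Set.Iio (L / a)) :=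
        Ioo_mem_nhdsLT_of_mem ⟨by positivity, le_refl _⟩
      filter_upwards [hIoo] with l hl
      exact hb ⟨l, ⟨hl.1, (hfeas l).mpr hl.2⟩, rfl⟩
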